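/- Let c ∈ ℝ and let ρ : (a,d) → ℝ be a smooth function with ρ'(u) ≠ 0 for all u and satisfying ρ'(u)² + ρ(u)² = (ρ(u)²/2 − c)². Define paracomplex-valued functions on (a,d) × ℝ by ψ₁(u,v) = (1/2)(ρ'(u) cos v − τ ρ(u) sin v), ψ₂(u,v) = (1/2)(ρ'(u) sin v + τ ρ(u) cos v), ψ₃(u,v) = −(τ/4)(ρ(u)² − 2c). Then: (1) they satisfy the Lorentzian Heisenberg Weierstrass system ∂ψ₁/∂z̄ − Re(conj(ψ₃)ψ₂) = 0 and ∂ψ₂/∂z̄ + Re(conj(ψ₃)ψ₁) = 0; (2) ψ₁² + ψ₂² − ψ₃² = 0. -/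

import Mathlib

/-- Paracomplex multiplication on 𝕃 = ℝ × ℝ. -/
def Lmul (z w : ℝ × ℝ) : ℝ × ℝ := (z.1 * w.1 + z.2 * w.2, z.1 * w.2 + z.2 * w.1)

/-- Paracomplex conjugation: a + τb ↦ a − τb. -/
def Lconj (z : ℝ × ℝ) : ℝ × ℝ := (z.1, -z.2)

/-- The real part of a paracomplex number, regarded as the paracomplex number (a, 0). -/
def LRe (z : ℝ × ℝ) : ℝ × ℝ := (z.1, 0)

/-- The paracomplex operator ∂/∂z̄: for ψ = (a, b), ∂ψ/∂z̄ = (1/2)(a_u − b_v, b_u − a_v). -/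
noncomputable def dzbarL (ψ : ℝ × ℝ → ℝ × ℝ) (p : ℝ × ℝ) : ℝ × ℝ :=
  ((1 / 2) * ((fderiv ℝ ψ p (1, 0)).1 - (fderiv ℝ ψ p (0, 1)).2),
   (1 / 2) * ((fderiv ℝ ψ p (1, 0)).2 - (fderiv ℝ ψ p (0, 1)).1))

/-- The helicoid Weierstrass data ψ₁ = (1/2)(ρ' cos v − τ ρ sin v),
ψ₂ = (1/2)(ρ' sin v + τ ρ cos v), ψ₃ = −(τ/4)(ρ² − 2c), for ρ smooth on (a,d) with
ρ' ≠ 0 and ρ'² + ρ² = (ρ²/2 − c)², satisfies the Lorentzian Heisenberg system and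
ψ₁² + ψ₂² − ψ₃² = 0. -/
theorem heisenberg_helicoid_data (a d c : ℝ) (ρ : ℝ → ℝ)
    (hρ : ContDiffOn ℝ (⊤ : ℕ∞) ρ (Set.Ioo a d))
    (hρ' : ∀ u ∈ Set.Ioo a d, deriv ρ u ≠ 0)
    (hode : ∀ u ∈ Set.Ioo a d,
      deriv ρ u ^ 2 + ρ u ^ 2 = (ρ u ^ 2 / 2 - c) ^ 2)
    (ψ₁ ψ₂ ψ₃ : ℝ × ℝ → ℝ × ℝ)
    (hψ₁ : ∀ p : ℝ × ℝ, ψ₁ p =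
      (1 / 2 * (deriv ρ p.1 * Real.cos p.2), 1 / 2 * (-(ρ p.1 * Real.sin p.2))))
    (hψ₂ : ∀ p : ℝ × ℝ, ψ₂ p =
      (1 / 2 * (deriv ρ p.1 * Real.sin p.2), 1 / 2 * (ρ p.1 * Real.cos p.2)))
    (hψ₃ : ∀ p : ℝ × ℝ, ψ₃ p = (0, -(1 / 4) * (ρ p.1 ^ 2 - 2 * c))) :
    ∀ p : ℝ × ℝ, p.1 ∈ Set.Ioo a d →
      (dzbarL ψ₁ p - LRe (Lmul (Lconj (ψ₃ p)) (ψ₂ p)) = 0 ∧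
       dzbarL ψ₂ p + LRe (Lmul (Lconj (ψ₃ p)) (ψ₁ p)) = 0) ∧
      Lmul (ψ₁ p) (ψ₁ p) + Lmul (ψ₂ p) (ψ₂ p) - Lmul (ψ₃ p) (ψ₃ p) = 0 := by
  intro p hp
  have hopen : Set.Ioo a d ∈ nhds p.1 := isOpen_Ioo.mem_nhds hp
  have hρd : ContDiffOn ℝ (⊤ : ℕ∞) (deriv ρ) (Set.Ioo a d) :=
    hρ.deriv_of_isOpen isOpen_Ioo (by simp)
  have hd1 : HasDerivAt ρ (deriv ρ p.1) p.1 :=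
    ((hρ.contDiffAt hopen).differentiableAt (by simp)).hasDerivAt
  have hd2 : HasDerivAt (deriv ρ) (deriv (deriv ρ) p.1) p.1 :=
    ((hρd.contDiffAt hopen).differentiableAt (by simp)).hasDerivAt
  set r0 := ρ p.1 with hr0
  set r1 := deriv ρ p.1 with hr1
  set r2 := deriv (deriv ρ) p.1 with hr2
  -- second-order ODE from differentiating the first-order one
  have key : r2 + r0 = (r0 ^ 2 / 2 - c) * r0 := by
    have hF : HasDerivAt (fun u => deriv ρ u ^ 2 + ρ u ^ 2)
        (2 * r1 ^ 1 * r2 + 2 * r0 ^ 1 * r1) p.1 := (hd2.pow 2).add (hd1.pow 2)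
    have hG : HasDerivAt (fun u => (ρ u ^ 2 / 2 - c) ^ 2)
        (2 * (r0 ^ 2 / 2 - c) ^ 1 * (2 * r0 ^ 1 * r1 / 2)) p.1 :=
      (((hd1.pow 2).div_const 2).sub_const c).pow 2
    have heq : (fun u => deriv ρ u ^ 2 + ρ u ^ 2) =ᶠ[nhds p.1]
        (fun u => (ρ u ^ 2 / 2 - c) ^ 2) := by
      filter_upwards [hopen] with u hu using hode u hu
    have hF' : HasDerivAt (fun u => (ρ u ^ 2 / 2 - c) ^ 2)
        (2 * r1 ^ 1 * r2 + 2 * r0 ^ 1 * r1) p.1 := by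
      exact hF.congr_of_eventuallyEq heq.symm
    have huniq := hF'.unique hG
    have hr1ne : r1 ≠ 0 := hρ' p.1 hp
    apply mul_left_cancel₀ (mul_ne_zero two_ne_zero hr1ne)
    ring_nf
    ring_nf at huniq
    linarith
  -- partial derivatives as fderivs
  have hfst : HasFDerivAt (fun q : ℝ × ℝ => q.1) (ContinuousLinearMap.fst ℝ ℝ ℝ) p :=
    hasFDerivAt_fst
  have hsnd : HasFDerivAt (fun q : ℝ × ℝ => q.2) (ContinuousLinearMap.snd ℝ ℝ ℝ) p :=
    hasFDerivAt_snd
  have hA : HasFDerivAt (fun q : ℝ × ℝ => ρ q.1) (r1 • ContinuousLinearMap.fst ℝ ℝ ℝ) p :=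
    hd1.comp_hasFDerivAt p hfst
  have hB : HasFDerivAt (fun q : ℝ × ℝ => deriv ρ q.1)
      (r2 • ContinuousLinearMap.fst ℝ ℝ ℝ) p := hd2.comp_hasFDerivAt p hfst
  have hC : HasFDerivAt (fun q : ℝ × ℝ => Real.cos q.2)
      ((-Real.sin p.2) • ContinuousLinearMap.snd ℝ ℝ ℝ) p :=
    (Real.hasDerivAt_cos p.2).comp_hasFDerivAt p hsnd
  have hD : HasFDerivAt (fun q : ℝ × ℝ => Real.sin q.2)
      ((Real.cos p.2) • ContinuousLinearMap.snd ℝ ℝ ℝ) p :=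
    (Real.hasDerivAt_sin p.2).comp_hasFDerivAt p hsnd
  set cv := Real.cos p.2 with hcv
  set sv := Real.sin p.2 with hsv
  set Lf := ContinuousLinearMap.fst ℝ ℝ ℝ
  set Ls := ContinuousLinearMap.snd ℝ ℝ ℝ
  -- ψ₁
  have h1 : HasFDerivAt ψ₁
      ((((1:ℝ)/2) • (r1 • ((-sv) • Ls) + cv • (r2 • Lf))).prod
       (((1:ℝ)/2) • (-(r0 • (cv • Ls) + sv • (r1 • Lf))))) p := by
    have ha : HasFDerivAt (fun q : ℝ × ℝ => 1 / 2 * (deriv ρ q.1 * Real.cos q.2))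
        (((1:ℝ)/2) • (r1 • ((-sv) • Ls) + cv • (r2 • Lf))) p := (hB.mul hC).const_mul _
    have hb : HasFDerivAt (fun q : ℝ × ℝ => 1 / 2 * (-(ρ q.1 * Real.sin q.2)))
        (((1:ℝ)/2) • (-(r0 • (cv • Ls) + sv • (r1 • Lf)))) p :=
      ((hA.mul hD).neg).const_mul _
    have := HasFDerivAt.prodMk ha hb
    exact this.congr_of_eventuallyEq (by filter_upwards with q using (hψ₁ q))
  have h2 : HasFDerivAt ψ₂
      ((((1:ℝ)/2) • (r1 • (cv • Ls) + sv • (r2 • Lf))).prod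
       (((1:ℝ)/2) • (r0 • ((-sv) • Ls) + cv • (r1 • Lf)))) p := by
    have ha : HasFDerivAt (fun q : ℝ × ℝ => 1 / 2 * (deriv ρ q.1 * Real.sin q.2))
        (((1:ℝ)/2) • (r1 • (cv • Ls) + sv • (r2 • Lf))) p := (hB.mul hD).const_mul _
    have hb : HasFDerivAt (fun q : ℝ × ℝ => 1 / 2 * (ρ q.1 * Real.cos q.2))
        (((1:ℝ)/2) • (r0 • ((-sv) • Ls) + cv • (r1 • Lf))) p := (hA.mul hC).const_mul _
    have := HasFDerivAt.prodMk ha hb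
    exact this.congr_of_eventuallyEq (by filter_upwards with q using (hψ₂ q))
  have hf1 := h1.fderiv
  have hf2 := h2.fderiv
  have pyth : sv ^ 2 + cv ^ 2 = 1 := Real.sin_sq_add_cos_sq p.2
  have hLf1 : Lf (1, 0) = 1 := rfl
  have hLf2 : Lf (0, 1) = 0 := rfl
  have hLs1 : Ls (1, 0) = 0 := rfl
  have hLs2 : Ls (0, 1) = 1 := rfl
  constructor
  · constructor
    · simp only [dzbarL, hf1, hψ₂ p, hψ₃ p, LRe, Lmul, Lconj, Prod.mk_sub_mk,
        ContinuousLinearMap.prod_apply, ContinuousLinearMap.add_apply,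
        ContinuousLinearMap.smul_apply, ContinuousLinearMap.neg_apply,
        ContinuousLinearMap.coe_fst', ContinuousLinearMap.coe_snd',
        smul_eq_mul, Prod.mk_eq_zero, hLf1, hLf2, hLs1, hLs2]
      constructor
      · linear_combination (cv / 4) * key
      · ring
    · simp only [dzbarL, hf2, hψ₁ p, hψ₃ p, LRe, Lmul, Lconj, Prod.mk_add_mk,
        ContinuousLinearMap.prod_apply, ContinuousLinearMap.add_apply,
        ContinuousLinearMap.smul_apply, ContinuousLinearMap.neg_apply,
        ContinuousLinearMap.coe_fst', ContinuousLinearMap.coe_snd',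
        smul_eq_mul, Prod.mk_eq_zero, hLf1, hLf2, hLs1, hLs2]
      constructor
      · linear_combination (sv / 4) * key
      · ring
  · have h := hode p.1 hp
    simp only [hψ₁ p, hψ₂ p, hψ₃ p, Lmul, Prod.mk_add_mk, Prod.mk_sub_mk, Prod.mk_eq_zero]
    constructor
    · linear_combination ((sv ^ 2 + cv ^ 2) / 4) * h + ((r0 ^ 2 / 2 - c) ^ 2 / 4) * pyth
    · ring
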